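/- arXiv:1501.02616 — 2 statements merged into one kernel-verified Lean document; each statement's English description precedes it below -/
import Mathlib

section
/- Let p be an odd prime. The translation τ_{1,-1}: (x,y) ↦ (x+1, y-1) of F_p² does not belong to the subgroup of affine transformations generated by τ_{1,1}: (x,y) ↦ (x+1,y+1), W: (x,y) ↦ (-x,-y), and V: (x,y) ↦ (y,x). -/
/-! The quantity `x - y` is preserved up to sign by `τ_{1,1}`, `W` and `V`, hence by every element
of the subgroup they generate, whereas `τ_{1,-1}` sends `(0,0)` to `(1,-1)`, whose difference
`2` is not `± 0` when `p` is odd. -/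

section SignedInvariant

variable {α β : Type*} [InvolutiveNeg β]

def signedInvariantSubgroup (f : α → β) : Subgroup (Equiv.Perm α) where
  carrier := {g | ∀ v, f (g v) = f v ∨ f (g v) = -f v}
  one_mem' _ := Or.inl rfl
  mul_mem' {g h} hg hh v := by
    rcases hh v with hv | hv <;> rcases hg (h v) with hgv | hgv
    · exact Or.inl (hgv.trans hv)
    · exact Or.inr (hgv.trans (congrArg Neg.neg hv))
    · exact Or.inr (hgv.trans hv)
    · exact Or.inl (by rw [Equiv.Perm.mul_apply, hgv, hv, neg_neg])
  inv_mem' {g} hg v := by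
    rcases hg (g⁻¹ v) with h | h <;> rw [show g (g⁻¹ v) = v from g.apply_symm_apply v] at h
    · exact Or.inl h.symm
    · exact Or.inr (by rw [h, neg_neg])

end SignedInvariant

theorem translation_antidiagonal_not_mem_closure {R : Type*} [CommRing R] (h2 : (2 : R) ≠ 0)
    (τ W V σ : Equiv.Perm (R × R))
    (hτ : ∀ v, τ v = (v.1 + 1, v.2 + 1))
    (hW : ∀ v, W v = (-v.1, -v.2))
    (hV : ∀ v, V v = (v.2, v.1))
    (hσ : ∀ v, σ v = (v.1 + 1, v.2 - 1)) :
    σ ∉ Subgroup.closure {τ, W, V} := by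
  let diff : R × R → R := fun v => v.1 - v.2
  have hclosure : Subgroup.closure {τ, W, V} ≤ signedInvariantSubgroup diff := by
    rw [Subgroup.closure_le]
    rintro g (rfl | rfl | rfl) v
    · exact Or.inl (by simp only [diff, hτ]; ring)
    · exact Or.inr (by simp only [diff, hW]; ring)
    · exact Or.inr (by simp only [diff, hV]; ring)
  intro hσmem
  rcases hclosure hσmem (0, 0) with h | h <;>
    exact h2 (by simpa [diff, hσ, one_add_one_eq_two] using h)

/-- For an odd prime `p`, the translation
`τ_{1,−1} : (x,y) ↦ (x+1, y−1)` of `F_p²` does not belong to the subgroup of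
permutations generated by `τ_{1,1} : (x,y) ↦ (x+1,y+1)`, `W : (x,y) ↦ (−x,−y)`
and `V : (x,y) ↦ (y,x)`. -/
theorem stmt_5 (p : ℕ) (hp : p.Prime) (hodd : p ≠ 2)
    (τ W V σ : Equiv.Perm (ZMod p × ZMod p))
    (hτ : ∀ v, τ v = (v.1 + 1, v.2 + 1))
    (hW : ∀ v, W v = (-v.1, -v.2))
    (hV : ∀ v, V v = (v.2, v.1))
    (hσ : ∀ v, σ v = (v.1 + 1, v.2 - 1)) :
    σ ∉ Subgroup.closure {τ, W, V} := by
  have := Fact.mk hp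
  have h2 : (2 : ZMod p) ≠ 0 := Ring.two_ne_zero (by rwa [ZMod.ringChar_zmod_n])
  exact translation_antidiagonal_not_mem_closure h2 τ W V σ hτ hW hV hσ
end

section
/- Let p be an odd prime. The projective plane curve over F_p defined by the homogenization of (x^p − x)(y^p − y) = 1 has exactly two singular points, namely (1:0:0) and (0:1:0), and both are ordinary p-fold points. Consequently its geometric genus equals (2p−1)(2p−2)/2 − 2·p(p−1)/2 = (p−1)². -/
/-! Write `F = A·B − Z^{2p}` with `A = X^p − XZ^{p−1}` and `B = Y^p − YZ^{p−1}`. In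
characteristic `p` one has `∂F/∂X = −Z^{p−1}B`, so at a singular point with `Z ≠ 0` we get
`B = 0` and then `F = −Z^{2p} ≠ 0`; hence `Z = 0`, where `F = X^pY^p` forces `X = 0` or `Y = 0`.
Conversely, at `(1:0:0)` both `B = Y(Y^{p−1} − Z^{p−1})` and `Z^{2p}` are products of two
polynomials vanishing there, so `F` is singular; symmetrically at `(0:1:0)`.

Both local equations equal `h − Z^{p−1}h − Z^{2p}`, where `h` is the homogenization of `T^p − T`,
so their lowest form is `h = ∏_{a ∈ 𝔽_p} (T − aZ)`: degree `p`, with `p` distinct linear factors.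
-/

open MvPolynomial

/-- The homogenization `F = (X^p − X Z^{p−1})(Y^p − Y Z^{p−1}) − Z^{2p}` of the
Artin–Mumford equation `(x^p−x)(y^p−y) = 1`, over a field `K`
(variables `0 ↦ X`, `1 ↦ Y`, `2 ↦ Z`). -/
noncomputable def amProj (p : ℕ) (K : Type*) [Field K] :
    MvPolynomial (Fin 3) K :=
  (X 0 ^ p - X 0 * X 2 ^ (p - 1)) * (X 1 ^ p - X 1 * X 2 ^ (p - 1))
    - X 2 ^ (2 * p)

/-- The dehomogenization of `amProj` at `X = 1`, a polynomial in `Y, Z`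
(variables `0 ↦ Y`, `1 ↦ Z`), local equation of the curve at `(1:0:0)`. -/
noncomputable def amLocal₁ (p : ℕ) (K : Type*) [Field K] :
    MvPolynomial (Fin 2) K :=
  (1 - X 1 ^ (p - 1)) * (X 0 ^ p - X 0 * X 1 ^ (p - 1)) - X 1 ^ (2 * p)

/-- The dehomogenization of `amProj` at `Y = 1`, a polynomial in `X, Z`
(variables `0 ↦ X`, `1 ↦ Z`), local equation of the curve at `(0:1:0)`. -/
noncomputable def amLocal₂ (p : ℕ) (K : Type*) [Field K] :
    MvPolynomial (Fin 2) K :=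
  (X 0 ^ p - X 0 * X 1 ^ (p - 1)) * (1 - X 1 ^ (p - 1)) - X 1 ^ (2 * p)

theorem FiniteField.prod_univ_X_sub_C (K : Type*) [Field K] [Fintype K] :
    ∏ a : K, (Polynomial.X - Polynomial.C a) = Polynomial.X ^ Fintype.card K - Polynomial.X := by
  have hdeg := FiniteField.X_pow_card_sub_X_natDegree_eq K (Fintype.one_lt_card (α := K))
  have hmonic : (Polynomial.X ^ Fintype.card K - Polynomial.X : Polynomial K).Monic :=
    Polynomial.monic_X_pow_sub
      (by rw [Polynomial.degree_X]; exact_mod_cast Fintype.one_lt_card (α := K))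
  have hroots := FiniteField.roots_X_pow_card_sub_X K
  rw [← Polynomial.prod_multiset_X_sub_C_of_monic_of_roots_card_eq hmonic
    (by rw [hroots, hdeg]; rfl), hroots, Finset.prod_eq_multiset_prod]

theorem Polynomial.homogenize_X_pow_sub_X {R : Type*} [CommRing R] {p : ℕ} (hp : p ≠ 0) :
    (Polynomial.X ^ p - Polynomial.X : Polynomial R).homogenize p
      = MvPolynomial.X 0 ^ p - MvPolynomial.X 0 * MvPolynomial.X 1 ^ (p - 1) := by
  simp [hp]

theorem ZMod.prod_X_sub_C_mul_X_eq_homogenize (p : ℕ) [Fact p.Prime] (R : Type*) [CommRing R]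
    [Algebra (ZMod p) R] :
    ∏ a : ZMod p, (X 0 - C (algebraMap (ZMod p) R a) * X 1 : MvPolynomial (Fin 2) R)
      = (Polynomial.X ^ p - Polynomial.X : Polynomial R).homogenize p := by
  have hprod : ∏ a : ZMod p, (Polynomial.X - Polynomial.C (algebraMap (ZMod p) R a))
      = (Polynomial.X ^ p - Polynomial.X : Polynomial R) := by
    simpa [Polynomial.map_prod] using
      congrArg (Polynomial.map (algebraMap (ZMod p) R)) (FiniteField.prod_univ_X_sub_C (ZMod p))
  have hcard : ∑ _a : ZMod p, 1 = p := by simp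
  have hhom := Polynomial.homogenize_finsetProd (s := Finset.univ) (n := fun _ => 1)
    fun a _ => Polynomial.natDegree_X_sub_C_le (algebraMap (ZMod p) R a)
  rw [hcard, hprod] at hhom
  simp [hhom]

theorem Nat.genus_formula_two_mul_eq_sub_one_sq (p : ℕ) :
    (2 * p - 1) * (2 * p - 2) / 2 - 2 * (p * (p - 1) / 2) = (p - 1) ^ 2 := by
  have h₁ : (2 * p - 1) * (2 * p - 2) / 2 = (2 * p - 1) * (p - 1) := by
    rw [show 2 * p - 2 = 2 * (p - 1) by omega, Nat.mul_left_comm,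
      Nat.mul_div_cancel_left _ two_pos]
  have h₂ : 2 * (p * (p - 1) / 2) = p * (p - 1) :=
    Nat.mul_div_cancel' (Nat.even_mul_pred_self p).two_dvd
  rw [h₁, h₂, ← Nat.sub_mul, show 2 * p - 1 - p = p - 1 by omega, sq]

theorem exists_ne_zero_smul_eq_e₀_or_e₁_iff {K : Type*} [MulZeroOneClass K] {v : Fin 3 → K}
    (hv : v ≠ 0) :
    (∃ c : K, c ≠ 0 ∧ (v = c • ![1, 0, 0] ∨ v = c • ![0, 1, 0]))
      ↔ v 2 = 0 ∧ (v 0 = 0 ∨ v 1 = 0) := by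
  constructor
  · rintro ⟨c, -, rfl | rfl⟩ <;> simp
  · rintro ⟨h₂, h₀ | h₁⟩
    · refine ⟨v 1, fun h₁ => hv ?_, Or.inr ?_⟩ <;> funext i <;> fin_cases i <;> simp [*]
    · refine ⟨v 0, fun h₀ => hv ?_, Or.inl ?_⟩ <;> funext i <;> fin_cases i <;> simp [*]

namespace MvPolynomial

variable {σ R : Type*}

section CommSemiring

variable [CommSemiring R] {f g : MvPolynomial σ R} {v : σ → R}

def IsSingularAt (f : MvPolynomial σ R) (v : σ → R) : Prop :=
  eval v f = 0 ∧ ∀ i, eval v (pderiv i f) = 0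

theorem isSingularAt_mul (hf : eval v f = 0) (hg : eval v g = 0) : IsSingularAt (f * g) v :=
  ⟨by simp [hf], fun i => by simp [Derivation.leibniz, hf, hg]⟩

theorem IsSingularAt.mul_left (h : IsSingularAt g v) (f : MvPolynomial σ R) :
    IsSingularAt (f * g) v :=
  ⟨by simp [h.1], fun i => by simp [Derivation.leibniz, h.1, h.2 i]⟩

end CommSemiring

theorem IsSingularAt.sub [CommRing R] {f g : MvPolynomial σ R} {v : σ → R}
    (hf : IsSingularAt f v) (hg : IsSingularAt g v) : IsSingularAt (f - g) v :=
  ⟨by simp [hf.1, hg.1], fun i => by simp [hf.2 i, hg.2 i]⟩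

end MvPolynomial

theorem pderiv_zero_amProj (p : ℕ) (K : Type*) [Field K] [CharP K p] :
    pderiv 0 (amProj p K) = -(X 2 ^ (p - 1) * (X 1 ^ p - X 1 * X 2 ^ (p - 1))) := by
  simp only [Fin.isValue, amProj, map_sub, Derivation.leibniz, Derivation.leibniz_pow, pderiv_X,
    ne_eq, one_ne_zero, not_false_eq_true, Pi.single_eq_of_ne, smul_eq_mul, mul_zero,
    Fin.reduceEq, add_zero, sub_self, Pi.single_eq_same, mul_one, nsmul_eq_mul,
    CharP.cast_eq_zero, zero_mul, zero_add, zero_sub, mul_neg, sub_zero, neg_inj]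
  ring

theorem amProj_isSingularAt_iff {p : ℕ} {K : Type*} [Field K] [CharP K p] (hp : 2 ≤ p)
    (v : Fin 3 → K) : IsSingularAt (amProj p K) v ↔ v 2 = 0 ∧ (v 0 = 0 ∨ v 1 = 0) := by
  obtain ⟨n, rfl⟩ : ∃ n, p = n + 1 := ⟨p - 1, by omega⟩
  have hn : n ≠ 0 := by omega
  constructor
  · rintro ⟨hF, hdF⟩
    have hF' : (v 0 ^ (n + 1) - v 0 * v 2 ^ n) * (v 1 ^ (n + 1) - v 1 * v 2 ^ n)
        - v 2 ^ (2 * (n + 1)) = 0 := by simpa [amProj] using hF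
    have hdF' : v 2 ^ n * (v 1 ^ (n + 1) - v 1 * v 2 ^ n) = 0 := by
      simpa [pderiv_zero_amProj] using hdF 0
    have hz : v 2 = 0 := by
      by_contra hz
      have hB : v 1 ^ (n + 1) - v 1 * v 2 ^ n = 0 :=
        (mul_eq_zero.1 hdF').resolve_left (pow_ne_zero _ hz)
      rw [hB, mul_zero, zero_sub, neg_eq_zero] at hF'
      exact hz (pow_eq_zero_iff (by omega) |>.1 hF')
    refine ⟨hz, ?_⟩
    simpa [hz, hn, ← mul_pow] using hF'
  · rintro ⟨hz, h₀ | h₁⟩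
    · have hfac : amProj (n + 1) K = (X 1 ^ (n + 1) - X 1 * X 2 ^ n)
          * (X 0 * (X 0 ^ n - X 2 ^ n)) - X 2 ^ (n + 1) * X 2 ^ (n + 1) := by
        simp only [amProj, add_tsub_cancel_right]; ring
      rw [hfac]
      exact (isSingularAt_mul (by simpa using h₀) (by simp [hz, h₀, hn])).mul_left _ |>.sub
        (isSingularAt_mul (by simp [hz]) (by simp [hz]))
    · have hfac : amProj (n + 1) K = (X 0 ^ (n + 1) - X 0 * X 2 ^ n)
          * (X 1 * (X 1 ^ n - X 2 ^ n)) - X 2 ^ (n + 1) * X 2 ^ (n + 1) := by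
        simp only [amProj, add_tsub_cancel_right]; ring
      rw [hfac]
      exact (isSingularAt_mul (by simpa using h₁) (by simp [hz, h₁, hn])).mul_left _ |>.sub
        (isSingularAt_mul (by simp [hz]) (by simp [hz]))

theorem amLocal₂_eq_amLocal₁ (p : ℕ) (K : Type*) [Field K] : amLocal₂ p K = amLocal₁ p K := by
  unfold amLocal₁ amLocal₂; ring

theorem amLocal₁_eq {p : ℕ} (hp : p ≠ 0) (K : Type*) [Field K] :
    amLocal₁ p K = (Polynomial.X ^ p - Polynomial.X : Polynomial K).homogenize p
      - X 1 ^ (p - 1) * (Polynomial.X ^ p - Polynomial.X : Polynomial K).homogenize p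
      - X 1 ^ (2 * p) := by
  rw [Polynomial.homogenize_X_pow_sub_X hp, amLocal₁]
  ring

theorem homogeneousComponent_amLocal₁ {p : ℕ} (hp : 2 ≤ p) (K : Type*) [Field K] {k : ℕ}
    (hk : k ≤ p) : homogeneousComponent k (amLocal₁ p K)
      = if k = p then (Polynomial.X ^ p - Polynomial.X : Polynomial K).homogenize p else 0 := by
  have hφ :=
    Polynomial.isHomogeneous_homogenize (R := K) (n := p) (Polynomial.X ^ p - Polynomial.X)
  have hψ := (isHomogeneous_X_pow (1 : Fin 2) (p - 1)).mul hφ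
  rw [amLocal₁_eq (by omega), map_sub, map_sub, homogeneousComponent_of_mem hφ,
    homogeneousComponent_of_mem hψ,
    homogeneousComponent_of_mem (isHomogeneous_X_pow (1 : Fin 2) (2 * p)),
    if_neg (show k ≠ p - 1 + p by omega), if_neg (show k ≠ 2 * p by omega), sub_zero, sub_zero]

theorem stmt_6_general (p : ℕ) [Fact p.Prime] :
    (∀ v : Fin 3 → AlgebraicClosure (ZMod p), v ≠ 0 →
      ((eval v (amProj p (AlgebraicClosure (ZMod p))) = 0
          ∧ ∀ i : Fin 3, eval v (pderiv i (amProj p (AlgebraicClosure (ZMod p)))) = 0)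
        ↔ (∃ c : AlgebraicClosure (ZMod p), c ≠ 0
            ∧ (v = c • ![1, 0, 0] ∨ v = c • ![0, 1, 0]))))
    ∧ (∀ k : ℕ, k < p →
        homogeneousComponent k (amLocal₁ p (AlgebraicClosure (ZMod p))) = 0)
    ∧ homogeneousComponent p (amLocal₁ p (AlgebraicClosure (ZMod p)))
        = ∏ a : ZMod p,
            (X 0 - C (algebraMap (ZMod p) (AlgebraicClosure (ZMod p)) a) * X 1)
    ∧ (∀ k : ℕ, k < p →
        homogeneousComponent k (amLocal₂ p (AlgebraicClosure (ZMod p))) = 0)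
    ∧ homogeneousComponent p (amLocal₂ p (AlgebraicClosure (ZMod p)))
        = ∏ b : ZMod p,
            (X 0 - C (algebraMap (ZMod p) (AlgebraicClosure (ZMod p)) b) * X 1)
    ∧ (2 * p - 1) * (2 * p - 2) / 2 - 2 * (p * (p - 1) / 2) = (p - 1) ^ 2 := by
  have hp : 2 ≤ p := (Fact.out : p.Prime).two_le
  have hlower (k : ℕ) (hk : k < p) :
      homogeneousComponent k (amLocal₁ p (AlgebraicClosure (ZMod p))) = 0 := by
    rw [homogeneousComponent_amLocal₁ hp _ hk.le, if_neg hk.ne]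
  have htangent : homogeneousComponent p (amLocal₁ p (AlgebraicClosure (ZMod p)))
      = ∏ a : ZMod p, (X 0 - C (algebraMap (ZMod p) (AlgebraicClosure (ZMod p)) a) * X 1) := by
    rw [homogeneousComponent_amLocal₁ hp _ le_rfl, if_pos rfl,
      ZMod.prod_X_sub_C_mul_X_eq_homogenize]
  rw [amLocal₂_eq_amLocal₁]
  exact ⟨fun v hv =>
      (amProj_isSingularAt_iff hp v).trans (exists_ne_zero_smul_eq_e₀_or_e₁_iff hv).symm,
    hlower, htangent, hlower, htangent, Nat.genus_formula_two_mul_eq_sub_one_sq p⟩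

/-- For an odd prime `p`, the projective plane curve over `F_p`
(viewed over the algebraic closure) defined by the homogenization of
`(x^p − x)(y^p − y) = 1` has exactly two singular points, `(1:0:0)` and
`(0:1:0)`, both ordinary `p`-fold points (multiplicity `p`, with the `p`
distinct tangent directions `Y = aZ`, resp. `X = bZ`, `a, b ∈ F_p`);
consequently the genus `(2p−1)(2p−2)/2 − 2·p(p−1)/2` equals `(p−1)²`. -/
theorem stmt_6 (p : ℕ) [Fact p.Prime] (hodd : p ≠ 2) :
    (∀ v : Fin 3 → AlgebraicClosure (ZMod p), v ≠ 0 →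
      ((eval v (amProj p (AlgebraicClosure (ZMod p))) = 0
          ∧ ∀ i : Fin 3, eval v (pderiv i (amProj p (AlgebraicClosure (ZMod p)))) = 0)
        ↔ (∃ c : AlgebraicClosure (ZMod p), c ≠ 0
            ∧ (v = c • ![1, 0, 0] ∨ v = c • ![0, 1, 0]))))
    ∧ (∀ k : ℕ, k < p →
        homogeneousComponent k (amLocal₁ p (AlgebraicClosure (ZMod p))) = 0)
    ∧ homogeneousComponent p (amLocal₁ p (AlgebraicClosure (ZMod p)))
        = ∏ a : ZMod p,
            (X 0 - C (algebraMap (ZMod p) (AlgebraicClosure (ZMod p)) a) * X 1)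
    ∧ (∀ k : ℕ, k < p →
        homogeneousComponent k (amLocal₂ p (AlgebraicClosure (ZMod p))) = 0)
    ∧ homogeneousComponent p (amLocal₂ p (AlgebraicClosure (ZMod p)))
        = ∏ b : ZMod p,
            (X 0 - C (algebraMap (ZMod p) (AlgebraicClosure (ZMod p)) b) * X 1)
    ∧ (2 * p - 1) * (2 * p - 2) / 2 - 2 * (p * (p - 1) / 2) = (p - 1) ^ 2 :=
  stmt_6_general p
end
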